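/- In Cl(7,0), the real span of {1, e₁₂₄₇, e₁₂₅₆, e₁₃₄₆, e₁₃₅₇, e₂₃₄₅, e₂₃₆₇, e₄₅₆₇} is closed under Clifford multiplication and is a commutative subalgebra of Cl(7,0). -/
import Mathlib

open CliffordAlgebra

noncomputable def Q7 : QuadraticForm ℝ (Fin 7 → ℝ) :=
  QuadraticMap.weightedSumSquares ℝ (fun _ : Fin 7 => (1 : ℝ))

/-- `e i` is the `i`-th orthonormal generator of Cl(7,0) (so `e 0` is e₁, …, `e 6` is e₇). -/
noncomputable def e (i : Fin 7) : CliffordAlgebra Q7 := ι Q7 (Pi.single i 1)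
/-- The span of 1 and the seven 4-blades of Φ₁*. -/
noncomputable def S : Submodule ℝ (CliffordAlgebra Q7) :=
  Submodule.span ℝ
    {1, e 0 * e 1 * e 3 * e 6, e 0 * e 1 * e 4 * e 5, e 0 * e 2 * e 3 * e 5,
      e 0 * e 2 * e 4 * e 6, e 1 * e 2 * e 3 * e 4, e 1 * e 2 * e 5 * e 6,
      e 3 * e 4 * e 5 * e 6}

lemma e_sq (i : Fin 7) : e i * e i = 1 := by
  rw [e, ι_sq_scalar]
  have : Q7 (Pi.single i 1) = 1 := by
    simp [Q7, QuadraticMap.weightedSumSquares_apply, Pi.single_apply]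
  rw [this, map_one]

lemma e_anti {i j : Fin 7} (h : i ≠ j) : e i * e j = -(e j * e i) := by
  have H := ι_mul_ι_add_swap (Q := Q7) (Pi.single i 1) (Pi.single j 1)
  have hp : QuadraticMap.polar Q7 (Pi.single i 1) (Pi.single j 1) = 0 := by
    simp [QuadraticMap.polar, Q7, QuadraticMap.weightedSumSquares_apply, Pi.single_apply,
      Finset.sum_ite_eq', h, h.symm, add_pow, Pi.add_apply, add_mul, mul_add, ite_and,
      Finset.sum_add_distrib, mul_ite, ite_mul, mul_one, mul_zero, one_mul, zero_mul,
      Finset.sum_ite_eq, Finset.mem_univ]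
  rw [hp, map_zero] at H
  rw [e, e]
  exact eq_neg_of_add_eq_zero_left H

lemma e_swap {i j : Fin 7} (h : j < i) : e i * e j = -(e j * e i) := e_anti (ne_of_gt h)
lemma e_swap' {i j : Fin 7} (h : j < i) (t : CliffordAlgebra Q7) :
    e i * (e j * t) = -(e j * (e i * t)) := by
  rw [← mul_assoc, e_swap h, neg_mul, mul_assoc]
lemma e_sq' (i : Fin 7) (t : CliffordAlgebra Q7) : e i * (e i * t) = t := by
  rw [← mul_assoc, e_sq, one_mul]

lemma m00 : e 0 * e 1 * e 3 * e 6 * (e 0 * e 1 * e 3 * e 6) = 1 := by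
  simp only [mul_assoc]
  simp (config := { decide := true }) only [e_swap, e_swap', e_sq', e_sq, mul_neg, neg_mul,
    neg_neg, mul_one, one_mul]
lemma m01 : e 0 * e 1 * e 3 * e 6 * (e 0 * e 1 * e 4 * e 5) = -(e 3 * e 4 * e 5 * e 6) := by
  simp only [mul_assoc]
  simp (config := { decide := true }) only [e_swap, e_swap', e_sq', e_sq, mul_neg, neg_mul,
    neg_neg, mul_one, one_mul]
lemma m02 : e 0 * e 1 * e 3 * e 6 * (e 0 * e 2 * e 3 * e 5) = -(e 1 * e 2 * e 5 * e 6) := by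
  simp only [mul_assoc]
  simp (config := { decide := true }) only [e_swap, e_swap', e_sq', e_sq, mul_neg, neg_mul,
    neg_neg, mul_one, one_mul]
lemma m03 : e 0 * e 1 * e 3 * e 6 * (e 0 * e 2 * e 4 * e 6) = e 1 * e 2 * e 3 * e 4 := by
  simp only [mul_assoc]
  simp (config := { decide := true }) only [e_swap, e_swap', e_sq', e_sq, mul_neg, neg_mul,
    neg_neg, mul_one, one_mul]
lemma m04 : e 0 * e 1 * e 3 * e 6 * (e 1 * e 2 * e 3 * e 4) = e 0 * e 2 * e 4 * e 6 := by
  simp only [mul_assoc]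
  simp (config := { decide := true }) only [e_swap, e_swap', e_sq', e_sq, mul_neg, neg_mul,
    neg_neg, mul_one, one_mul]
lemma m05 : e 0 * e 1 * e 3 * e 6 * (e 1 * e 2 * e 5 * e 6) = -(e 0 * e 2 * e 3 * e 5) := by
  simp only [mul_assoc]
  simp (config := { decide := true }) only [e_swap, e_swap', e_sq', e_sq, mul_neg, neg_mul,
    neg_neg, mul_one, one_mul]
lemma m06 : e 0 * e 1 * e 3 * e 6 * (e 3 * e 4 * e 5 * e 6) = -(e 0 * e 1 * e 4 * e 5) := by
  simp only [mul_assoc]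
  simp (config := { decide := true }) only [e_swap, e_swap', e_sq', e_sq, mul_neg, neg_mul,
    neg_neg, mul_one, one_mul]
lemma m10 : e 0 * e 1 * e 4 * e 5 * (e 0 * e 1 * e 3 * e 6) = -(e 3 * e 4 * e 5 * e 6) := by
  simp only [mul_assoc]
  simp (config := { decide := true }) only [e_swap, e_swap', e_sq', e_sq, mul_neg, neg_mul,
    neg_neg, mul_one, one_mul]
lemma m11 : e 0 * e 1 * e 4 * e 5 * (e 0 * e 1 * e 4 * e 5) = 1 := by
  simp only [mul_assoc]
  simp (config := { decide := true }) only [e_swap, e_swap', e_sq', e_sq, mul_neg, neg_mul,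
    neg_neg, mul_one, one_mul]
lemma m12 : e 0 * e 1 * e 4 * e 5 * (e 0 * e 2 * e 3 * e 5) = -(e 1 * e 2 * e 3 * e 4) := by
  simp only [mul_assoc]
  simp (config := { decide := true }) only [e_swap, e_swap', e_sq', e_sq, mul_neg, neg_mul,
    neg_neg, mul_one, one_mul]
lemma m13 : e 0 * e 1 * e 4 * e 5 * (e 0 * e 2 * e 4 * e 6) = e 1 * e 2 * e 5 * e 6 := by
  simp only [mul_assoc]
  simp (config := { decide := true }) only [e_swap, e_swap', e_sq', e_sq, mul_neg, neg_mul,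
    neg_neg, mul_one, one_mul]
lemma m14 : e 0 * e 1 * e 4 * e 5 * (e 1 * e 2 * e 3 * e 4) = -(e 0 * e 2 * e 3 * e 5) := by
  simp only [mul_assoc]
  simp (config := { decide := true }) only [e_swap, e_swap', e_sq', e_sq, mul_neg, neg_mul,
    neg_neg, mul_one, one_mul]
lemma m15 : e 0 * e 1 * e 4 * e 5 * (e 1 * e 2 * e 5 * e 6) = e 0 * e 2 * e 4 * e 6 := by
  simp only [mul_assoc]
  simp (config := { decide := true }) only [e_swap, e_swap', e_sq', e_sq, mul_neg, neg_mul,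
    neg_neg, mul_one, one_mul]
lemma m16 : e 0 * e 1 * e 4 * e 5 * (e 3 * e 4 * e 5 * e 6) = -(e 0 * e 1 * e 3 * e 6) := by
  simp only [mul_assoc]
  simp (config := { decide := true }) only [e_swap, e_swap', e_sq', e_sq, mul_neg, neg_mul,
    neg_neg, mul_one, one_mul]
lemma m20 : e 0 * e 2 * e 3 * e 5 * (e 0 * e 1 * e 3 * e 6) = -(e 1 * e 2 * e 5 * e 6) := by
  simp only [mul_assoc]
  simp (config := { decide := true }) only [e_swap, e_swap', e_sq', e_sq, mul_neg, neg_mul,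
    neg_neg, mul_one, one_mul]
lemma m21 : e 0 * e 2 * e 3 * e 5 * (e 0 * e 1 * e 4 * e 5) = -(e 1 * e 2 * e 3 * e 4) := by
  simp only [mul_assoc]
  simp (config := { decide := true }) only [e_swap, e_swap', e_sq', e_sq, mul_neg, neg_mul,
    neg_neg, mul_one, one_mul]
lemma m22 : e 0 * e 2 * e 3 * e 5 * (e 0 * e 2 * e 3 * e 5) = 1 := by
  simp only [mul_assoc]
  simp (config := { decide := true }) only [e_swap, e_swap', e_sq', e_sq, mul_neg, neg_mul,
    neg_neg, mul_one, one_mul]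
lemma m23 : e 0 * e 2 * e 3 * e 5 * (e 0 * e 2 * e 4 * e 6) = e 3 * e 4 * e 5 * e 6 := by
  simp only [mul_assoc]
  simp (config := { decide := true }) only [e_swap, e_swap', e_sq', e_sq, mul_neg, neg_mul,
    neg_neg, mul_one, one_mul]
lemma m24 : e 0 * e 2 * e 3 * e 5 * (e 1 * e 2 * e 3 * e 4) = -(e 0 * e 1 * e 4 * e 5) := by
  simp only [mul_assoc]
  simp (config := { decide := true }) only [e_swap, e_swap', e_sq', e_sq, mul_neg, neg_mul,
    neg_neg, mul_one, one_mul]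
lemma m25 : e 0 * e 2 * e 3 * e 5 * (e 1 * e 2 * e 5 * e 6) = -(e 0 * e 1 * e 3 * e 6) := by
  simp only [mul_assoc]
  simp (config := { decide := true }) only [e_swap, e_swap', e_sq', e_sq, mul_neg, neg_mul,
    neg_neg, mul_one, one_mul]
lemma m26 : e 0 * e 2 * e 3 * e 5 * (e 3 * e 4 * e 5 * e 6) = e 0 * e 2 * e 4 * e 6 := by
  simp only [mul_assoc]
  simp (config := { decide := true }) only [e_swap, e_swap', e_sq', e_sq, mul_neg, neg_mul,
    neg_neg, mul_one, one_mul]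
lemma m30 : e 0 * e 2 * e 4 * e 6 * (e 0 * e 1 * e 3 * e 6) = e 1 * e 2 * e 3 * e 4 := by
  simp only [mul_assoc]
  simp (config := { decide := true }) only [e_swap, e_swap', e_sq', e_sq, mul_neg, neg_mul,
    neg_neg, mul_one, one_mul]
lemma m31 : e 0 * e 2 * e 4 * e 6 * (e 0 * e 1 * e 4 * e 5) = e 1 * e 2 * e 5 * e 6 := by
  simp only [mul_assoc]
  simp (config := { decide := true }) only [e_swap, e_swap', e_sq', e_sq, mul_neg, neg_mul,
    neg_neg, mul_one, one_mul]
lemma m32 : e 0 * e 2 * e 4 * e 6 * (e 0 * e 2 * e 3 * e 5) = e 3 * e 4 * e 5 * e 6 := by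
  simp only [mul_assoc]
  simp (config := { decide := true }) only [e_swap, e_swap', e_sq', e_sq, mul_neg, neg_mul,
    neg_neg, mul_one, one_mul]
lemma m33 : e 0 * e 2 * e 4 * e 6 * (e 0 * e 2 * e 4 * e 6) = 1 := by
  simp only [mul_assoc]
  simp (config := { decide := true }) only [e_swap, e_swap', e_sq', e_sq, mul_neg, neg_mul,
    neg_neg, mul_one, one_mul]
lemma m34 : e 0 * e 2 * e 4 * e 6 * (e 1 * e 2 * e 3 * e 4) = e 0 * e 1 * e 3 * e 6 := by
  simp only [mul_assoc]
  simp (config := { decide := true }) only [e_swap, e_swap', e_sq', e_sq, mul_neg, neg_mul,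
    neg_neg, mul_one, one_mul]
lemma m35 : e 0 * e 2 * e 4 * e 6 * (e 1 * e 2 * e 5 * e 6) = e 0 * e 1 * e 4 * e 5 := by
  simp only [mul_assoc]
  simp (config := { decide := true }) only [e_swap, e_swap', e_sq', e_sq, mul_neg, neg_mul,
    neg_neg, mul_one, one_mul]
lemma m36 : e 0 * e 2 * e 4 * e 6 * (e 3 * e 4 * e 5 * e 6) = e 0 * e 2 * e 3 * e 5 := by
  simp only [mul_assoc]
  simp (config := { decide := true }) only [e_swap, e_swap', e_sq', e_sq, mul_neg, neg_mul,
    neg_neg, mul_one, one_mul]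
lemma m40 : e 1 * e 2 * e 3 * e 4 * (e 0 * e 1 * e 3 * e 6) = e 0 * e 2 * e 4 * e 6 := by
  simp only [mul_assoc]
  simp (config := { decide := true }) only [e_swap, e_swap', e_sq', e_sq, mul_neg, neg_mul,
    neg_neg, mul_one, one_mul]
lemma m41 : e 1 * e 2 * e 3 * e 4 * (e 0 * e 1 * e 4 * e 5) = -(e 0 * e 2 * e 3 * e 5) := by
  simp only [mul_assoc]
  simp (config := { decide := true }) only [e_swap, e_swap', e_sq', e_sq, mul_neg, neg_mul,
    neg_neg, mul_one, one_mul]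
lemma m42 : e 1 * e 2 * e 3 * e 4 * (e 0 * e 2 * e 3 * e 5) = -(e 0 * e 1 * e 4 * e 5) := by
  simp only [mul_assoc]
  simp (config := { decide := true }) only [e_swap, e_swap', e_sq', e_sq, mul_neg, neg_mul,
    neg_neg, mul_one, one_mul]
lemma m43 : e 1 * e 2 * e 3 * e 4 * (e 0 * e 2 * e 4 * e 6) = e 0 * e 1 * e 3 * e 6 := by
  simp only [mul_assoc]
  simp (config := { decide := true }) only [e_swap, e_swap', e_sq', e_sq, mul_neg, neg_mul,
    neg_neg, mul_one, one_mul]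
lemma m44 : e 1 * e 2 * e 3 * e 4 * (e 1 * e 2 * e 3 * e 4) = 1 := by
  simp only [mul_assoc]
  simp (config := { decide := true }) only [e_swap, e_swap', e_sq', e_sq, mul_neg, neg_mul,
    neg_neg, mul_one, one_mul]
lemma m45 : e 1 * e 2 * e 3 * e 4 * (e 1 * e 2 * e 5 * e 6) = -(e 3 * e 4 * e 5 * e 6) := by
  simp only [mul_assoc]
  simp (config := { decide := true }) only [e_swap, e_swap', e_sq', e_sq, mul_neg, neg_mul,
    neg_neg, mul_one, one_mul]
lemma m46 : e 1 * e 2 * e 3 * e 4 * (e 3 * e 4 * e 5 * e 6) = -(e 1 * e 2 * e 5 * e 6) := by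
  simp only [mul_assoc]
  simp (config := { decide := true }) only [e_swap, e_swap', e_sq', e_sq, mul_neg, neg_mul,
    neg_neg, mul_one, one_mul]
lemma m50 : e 1 * e 2 * e 5 * e 6 * (e 0 * e 1 * e 3 * e 6) = -(e 0 * e 2 * e 3 * e 5) := by
  simp only [mul_assoc]
  simp (config := { decide := true }) only [e_swap, e_swap', e_sq', e_sq, mul_neg, neg_mul,
    neg_neg, mul_one, one_mul]
lemma m51 : e 1 * e 2 * e 5 * e 6 * (e 0 * e 1 * e 4 * e 5) = e 0 * e 2 * e 4 * e 6 := by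
  simp only [mul_assoc]
  simp (config := { decide := true }) only [e_swap, e_swap', e_sq', e_sq, mul_neg, neg_mul,
    neg_neg, mul_one, one_mul]
lemma m52 : e 1 * e 2 * e 5 * e 6 * (e 0 * e 2 * e 3 * e 5) = -(e 0 * e 1 * e 3 * e 6) := by
  simp only [mul_assoc]
  simp (config := { decide := true }) only [e_swap, e_swap', e_sq', e_sq, mul_neg, neg_mul,
    neg_neg, mul_one, one_mul]
lemma m53 : e 1 * e 2 * e 5 * e 6 * (e 0 * e 2 * e 4 * e 6) = e 0 * e 1 * e 4 * e 5 := by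
  simp only [mul_assoc]
  simp (config := { decide := true }) only [e_swap, e_swap', e_sq', e_sq, mul_neg, neg_mul,
    neg_neg, mul_one, one_mul]
lemma m54 : e 1 * e 2 * e 5 * e 6 * (e 1 * e 2 * e 3 * e 4) = -(e 3 * e 4 * e 5 * e 6) := by
  simp only [mul_assoc]
  simp (config := { decide := true }) only [e_swap, e_swap', e_sq', e_sq, mul_neg, neg_mul,
    neg_neg, mul_one, one_mul]
lemma m55 : e 1 * e 2 * e 5 * e 6 * (e 1 * e 2 * e 5 * e 6) = 1 := by
  simp only [mul_assoc]
  simp (config := { decide := true }) only [e_swap, e_swap', e_sq', e_sq, mul_neg, neg_mul,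
    neg_neg, mul_one, one_mul]
lemma m56 : e 1 * e 2 * e 5 * e 6 * (e 3 * e 4 * e 5 * e 6) = -(e 1 * e 2 * e 3 * e 4) := by
  simp only [mul_assoc]
  simp (config := { decide := true }) only [e_swap, e_swap', e_sq', e_sq, mul_neg, neg_mul,
    neg_neg, mul_one, one_mul]
lemma m60 : e 3 * e 4 * e 5 * e 6 * (e 0 * e 1 * e 3 * e 6) = -(e 0 * e 1 * e 4 * e 5) := by
  simp only [mul_assoc]
  simp (config := { decide := true }) only [e_swap, e_swap', e_sq', e_sq, mul_neg, neg_mul,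
    neg_neg, mul_one, one_mul]
lemma m61 : e 3 * e 4 * e 5 * e 6 * (e 0 * e 1 * e 4 * e 5) = -(e 0 * e 1 * e 3 * e 6) := by
  simp only [mul_assoc]
  simp (config := { decide := true }) only [e_swap, e_swap', e_sq', e_sq, mul_neg, neg_mul,
    neg_neg, mul_one, one_mul]
lemma m62 : e 3 * e 4 * e 5 * e 6 * (e 0 * e 2 * e 3 * e 5) = e 0 * e 2 * e 4 * e 6 := by
  simp only [mul_assoc]
  simp (config := { decide := true }) only [e_swap, e_swap', e_sq', e_sq, mul_neg, neg_mul,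
    neg_neg, mul_one, one_mul]
lemma m63 : e 3 * e 4 * e 5 * e 6 * (e 0 * e 2 * e 4 * e 6) = e 0 * e 2 * e 3 * e 5 := by
  simp only [mul_assoc]
  simp (config := { decide := true }) only [e_swap, e_swap', e_sq', e_sq, mul_neg, neg_mul,
    neg_neg, mul_one, one_mul]
lemma m64 : e 3 * e 4 * e 5 * e 6 * (e 1 * e 2 * e 3 * e 4) = -(e 1 * e 2 * e 5 * e 6) := by
  simp only [mul_assoc]
  simp (config := { decide := true }) only [e_swap, e_swap', e_sq', e_sq, mul_neg, neg_mul,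
    neg_neg, mul_one, one_mul]
lemma m65 : e 3 * e 4 * e 5 * e 6 * (e 1 * e 2 * e 5 * e 6) = -(e 1 * e 2 * e 3 * e 4) := by
  simp only [mul_assoc]
  simp (config := { decide := true }) only [e_swap, e_swap', e_sq', e_sq, mul_neg, neg_mul,
    neg_neg, mul_one, one_mul]
lemma m66 : e 3 * e 4 * e 5 * e 6 * (e 3 * e 4 * e 5 * e 6) = 1 := by
  simp only [mul_assoc]
  simp (config := { decide := true }) only [e_swap, e_swap', e_sq', e_sq, mul_neg, neg_mul,
    neg_neg, mul_one, one_mul]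

lemma hS0 : (1 : CliffordAlgebra Q7) ∈ S := Submodule.subset_span (by left; rfl)
lemma hS1 : e 0 * e 1 * e 3 * e 6 ∈ S := Submodule.subset_span (by right; left; rfl)
lemma hS2 : e 0 * e 1 * e 4 * e 5 ∈ S := Submodule.subset_span (by right; right; left; rfl)
lemma hS3 : e 0 * e 2 * e 3 * e 5 ∈ S := Submodule.subset_span (by right; right; right; left; rfl)
lemma hS4 : e 0 * e 2 * e 4 * e 6 ∈ S := Submodule.subset_span (by right; right; right; right; left; rfl)
lemma hS5 : e 1 * e 2 * e 3 * e 4 ∈ S := Submodule.subset_span (by right; right; right; right; right; left; rfl)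
lemma hS6 : e 1 * e 2 * e 5 * e 6 ∈ S := Submodule.subset_span (by right; right; right; right; right; right; left; rfl)
lemma hS7 : e 3 * e 4 * e 5 * e 6 ∈ S := Submodule.subset_span (by right; right; right; right; right; right; right; rfl)

theorem stmt5 :
    (∀ x ∈ S, ∀ y ∈ S, x * y ∈ S) ∧ (∀ x ∈ S, ∀ y ∈ S, x * y = y * x) := by
  have key : ∀ x ∈ S, ∀ y ∈ S, x * y ∈ S ∧ x * y = y * x := by
    intro x hx y hy
    refine Submodule.span_induction₂ (p := fun a b _ _ => a * b ∈ S ∧ a * b = b * a) ?_ ?_ ?_ ?_ ?_ ?_ ?_ hx hy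
    · intro a b ha hb
      simp only [Set.mem_insert_iff, Set.mem_singleton_iff] at ha hb
      rcases ha with rfl|rfl|rfl|rfl|rfl|rfl|rfl|rfl <;>
        rcases hb with rfl|rfl|rfl|rfl|rfl|rfl|rfl|rfl <;>
        simp only [m00, m01, m02, m03, m04, m05, m06, m10, m11, m12, m13, m14, m15, m16, m20, m21, m22, m23, m24, m25, m26, m30, m31, m32, m33, m34, m35, m36, m40, m41, m42, m43, m44, m45, m46, m50, m51, m52, m53, m54, m55, m56, m60, m61, m62, m63, m64, m65, m66, one_mul, mul_one] <;>
        constructor <;>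
        first | trivial | rfl | exact hS0 | exact hS1 | exact hS2 | exact hS3 | exact hS4 | exact hS5 | exact hS6 | exact hS7 | exact Submodule.neg_mem S hS1 | exact Submodule.neg_mem S hS2 | exact Submodule.neg_mem S hS3 | exact Submodule.neg_mem S hS4 | exact Submodule.neg_mem S hS5 | exact Submodule.neg_mem S hS6 | exact Submodule.neg_mem S hS7
    · intro y _; simp only [zero_mul, mul_zero]; exact ⟨Submodule.zero_mem S, trivial⟩
    · intro x _; simp only [zero_mul, mul_zero]; exact ⟨Submodule.zero_mem S, trivial⟩
    · intro a b c _ _ _ h1 h2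
      rw [add_mul, mul_add]
      exact ⟨Submodule.add_mem S h1.1 h2.1, by rw [h1.2, h2.2]⟩
    · intro a b c _ _ _ h1 h2
      rw [mul_add, add_mul]
      exact ⟨Submodule.add_mem S h1.1 h2.1, by rw [h1.2, h2.2]⟩
    · intro r a b _ _ h
      rw [smul_mul_assoc, mul_smul_comm]
      exact ⟨Submodule.smul_mem S r h.1, by rw [h.2]⟩
    · intro r a b _ _ h
      rw [mul_smul_comm, smul_mul_assoc]
      exact ⟨Submodule.smul_mem S r h.1, by rw [h.2]⟩
  exact ⟨fun x hx y hy => (key x hx y hy).1, fun x hx y hy => (key x hx y hy).2⟩
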